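/- arXiv:1406.6246 — 2 statements merged into one kernel-verified Lean document; each statement's English description precedes it below -/
import Mathlib

section
/- Let A be an integral domain of characteristic zero, B a locally nilpotent derivation of A, and f ∈ A. Then the derivation fB (defined by (fB)(a) = f·B(a)) is locally nilpotent if and only if B(f) = 0. -/
/-!
If `B f = 0` then `(f B)^n = f^n B^n`, so `f B` inherits local nilpotence from `B`.
Conversely, call the largest `m` with `B^m a ≠ 0` the degree of `a ≠ 0`. By the general Leibniz
rule the top term of `B^(m+n) (a b)` is `(m+n choose m) B^m a B^n b`, which is nonzero in a domain
of characteristic zero, so degrees add. Hence if `B f ≠ 0` (degree of `f` at least one), then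
`B (f b) ≠ 0` for every `b ≠ 0`, and by induction `B ((f B)^n f) ≠ 0` for all `n`: `f B` never
kills `f`.
-/

open Finset

theorem Function.exists_iterate_ne_zero_and_iterate_succ_eq_zero {α : Type*} [Zero α]
    (g : α → α) {a : α} (ha : a ≠ 0) {N : ℕ} (hN : g^[N] a = 0) :
    ∃ m, g^[m] a ≠ 0 ∧ g^[m + 1] a = 0 := by
  induction N with
  | zero => exact absurd hN ha
  | succ N ih =>
    by_cases h : g^[N] a = 0
    · exact ih h
    · exact ⟨N, h, hN⟩

namespace Derivation

section CommSemiring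

variable {R A : Type*} [CommSemiring R] [CommSemiring A] [Algebra R A] (D : Derivation R A A)

theorem iterate_apply_eq_zero_of_le {a : A} {m n : ℕ} (hmn : m ≤ n) (hm : D^[m] a = 0) :
    D^[n] a = 0 := by
  obtain ⟨k, rfl⟩ := Nat.exists_eq_add_of_le' hmn
  rw [Function.iterate_add_apply, hm, iterate_map_zero]

theorem iterate_apply_mul (n : ℕ) (a b : A) :
    D^[n] (a * b) = ∑ ij ∈ antidiagonal n, (n.choose ij.1 : A) * (D^[ij.1] a * D^[ij.2] b) := by
  induction n with
  | zero => simp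
  | succ n ih =>
    rw [sum_antidiagonal_choose_succ_mul (fun i j => D^[i] a * D^[j] b) n]
    simp only [Function.iterate_succ_apply', ih, map_sum, leibniz, smul_eq_mul,
      map_natCast, mul_add, sum_add_distrib, mul_zero, zero_add, add_comm]
    congr 1
    refine sum_congr rfl fun ⟨i, j⟩ hij => ?_
    rw [n.choose_symm_of_eq_add (HasAntidiagonal.mem_antidiagonal.1 hij).symm, mul_comm (D^[j] b)]

theorem iterate_apply_mul_of_iterate_succ_eq_zero {a b : A} {m n : ℕ}
    (ha : D^[m + 1] a = 0) (hb : D^[n + 1] b = 0) :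
    D^[m + n] (a * b) = ((m + n).choose m : A) * (D^[m] a * D^[n] b) := by
  rw [iterate_apply_mul, sum_eq_single_of_mem (m, n) (HasAntidiagonal.mem_antidiagonal.2 rfl)]
  rintro ⟨i, j⟩ hij hne
  rw [HasAntidiagonal.mem_antidiagonal] at hij
  rcases lt_or_gt_of_ne (fun h : i = m => hne (Prod.ext h (by simp only; omega))) with hi | hi
  · rw [iterate_apply_eq_zero_of_le D (show n + 1 ≤ j by omega) hb, mul_zero, mul_zero]
  · rw [iterate_apply_eq_zero_of_le D hi ha, zero_mul, mul_zero]

theorem iterate_mul_apply_eq_pow_mul_of_apply_eq_zero {f : A} (hf : D f = 0) (n : ℕ) (a : A) :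
    (fun a => f * D a)^[n] a = f ^ n * D^[n] a := by
  induction n with
  | zero => simp
  | succ n ih =>
    rw [Function.iterate_succ_apply', ih, leibniz, leibniz_pow, hf, Function.iterate_succ_apply']
    simp only [smul_eq_mul]
    ring

end CommSemiring

section Domain

variable {R A : Type*} [CommSemiring R] [CommRing A] [IsDomain A] [CharZero A] [Algebra R A]
  (D : Derivation R A A)

theorem apply_mul_ne_zero {f b : A} (hfD : ∃ n, D^[n] f = 0) (hbD : ∃ n, D^[n] b = 0)
    (hf : D f ≠ 0) (hb : b ≠ 0) : D (f * b) ≠ 0 := by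
  obtain ⟨N, hN⟩ := hfD
  obtain ⟨M, hM⟩ := hbD
  obtain ⟨d, hd, hd'⟩ := Function.exists_iterate_ne_zero_and_iterate_succ_eq_zero D
    (fun h => hf (h ▸ map_zero D)) hN
  obtain ⟨e, he, he'⟩ := Function.exists_iterate_ne_zero_and_iterate_succ_eq_zero D hb hM
  have hd_pos : 1 ≤ d := Nat.one_le_iff_ne_zero.2 fun h => hf (by simpa [h] using hd')
  have htop : D^[d + e] (f * b) ≠ 0 := by
    rw [iterate_apply_mul_of_iterate_succ_eq_zero D hd' he']
    exact mul_ne_zero (Nat.cast_ne_zero.2 (Nat.choose_pos (by omega)).ne') (mul_ne_zero hd he)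
  intro h
  exact htop (iterate_apply_eq_zero_of_le D (m := 1) (by omega) h)

end Domain

end Derivation

/-- For a locally nilpotent derivation `B` of an integral domain of characteristic
zero and `f ∈ A`, the derivation `f • B` is locally nilpotent iff `B f = 0`. -/
theorem smul_locallyNilpotent_iff {A : Type*} [CommRing A] [IsDomain A] [CharZero A]
    (B : Derivation ℤ A A) (hB : ∀ a : A, ∃ n : ℕ, (⇑B)^[n] a = 0) (f : A) :
    (∀ a : A, ∃ n : ℕ, (fun a => f * B a)^[n] a = 0) ↔ B f = 0 := by
  constructor
  · intro h
    by_contra hf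
    have hne : ∀ n, B ((fun a => f * B a)^[n] f) ≠ 0 := by
      intro n
      induction n with
      | zero => exact hf
      | succ n ih =>
        rw [Function.iterate_succ_apply']
        exact B.apply_mul_ne_zero (hB f) (hB _) hf ih
    obtain ⟨n, hn⟩ := h f
    exact hne n (by rw [hn, map_zero])
  · intro hf a
    obtain ⟨n, hn⟩ := hB a
    exact ⟨n, by rw [B.iterate_mul_apply_eq_pow_mul_of_apply_eq_zero hf, hn, mul_zero]⟩
end

section
/- Let A be an integral domain of characteristic zero and B a locally nilpotent derivation of A. If f ∈ A satisfies B(f) ∈ fA (i.e. f divides B(f)), then B(f) = 0. -/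
/-! Write `B f = f * c`. If `p` and `q` are the largest exponents with `B^[p] f ≠ 0` and
`B^[q] c ≠ 0`, the Leibniz rule leaves a single term in `B^[p+q] (f * c)`, namely
`(p+q).choose p • (B^[p] f * B^[q] c)`, which is nonzero in a domain of characteristic zero.
But `B^[p+q] (f * c) = B^[p+q+1] f = 0`. -/

open Finset

theorem Function.exists_iterate_ne_zero_iterate_succ_eq_zero {α : Type*} [Zero α]
    {f : α → α} {a : α} (ha : a ≠ 0) {n : ℕ} (hn : f^[n] a = 0) :
    ∃ p, f^[p] a ≠ 0 ∧ f^[p + 1] a = 0 := by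
  induction n with
  | zero => exact absurd hn ha
  | succ k ih =>
    by_cases hk : f^[k] a = 0
    · exact ih hk
    · exact ⟨k, hk, hn⟩

namespace Derivation

variable {R A : Type*} [CommSemiring R] [CommSemiring A] [Algebra R A] (D : Derivation R A A)

theorem iterate_eq_zero_of_le {a : A} {m n : ℕ} (ha : D^[m] a = 0) (hmn : m ≤ n) :
    D^[n] a = 0 := by
  rw [← Nat.sub_add_cancel hmn, Function.iterate_add_apply, ha]
  exact iterate_map_zero D _

theorem iterate_map_mul (n : ℕ) (a b : A) :
    D^[n] (a * b) = ∑ ij ∈ antidiagonal n, n.choose ij.1 • (D^[ij.1] a * D^[ij.2] b) := by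
  induction n with
  | zero => simp
  | succ n ih =>
    rw [sum_antidiagonal_choose_succ_nsmul (M := A) (fun i j => D^[i] a * D^[j] b) n]
    have hD : ∀ x y : A, D (x * y) = x * D y + D x * y := fun x y => by
      rw [D.leibniz, smul_eq_mul, smul_eq_mul, mul_comm (D x)]
    simp only [Function.iterate_succ_apply', ih, map_sum, map_nsmul, hD, smul_add,
      sum_add_distrib]
    congr 1
    refine sum_congr rfl fun ⟨i, j⟩ hij => ?_
    rw [n.choose_symm_of_eq_add (HasAntidiagonal.mem_antidiagonal.1 hij).symm]

theorem iterate_add_map_mul_of_iterate_succ_eq_zero {a b : A} {p q : ℕ}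
    (ha : D^[p + 1] a = 0) (hb : D^[q + 1] b = 0) :
    D^[p + q] (a * b) = (p + q).choose p • (D^[p] a * D^[q] b) := by
  rw [iterate_map_mul, sum_eq_single_of_mem (p, q) (HasAntidiagonal.mem_antidiagonal.2 rfl)]
  rintro ⟨i, j⟩ hij hne
  rw [HasAntidiagonal.mem_antidiagonal] at hij
  rw [Ne, Prod.mk.injEq] at hne
  rcases lt_or_ge p i with hi | hi
  · rw [D.iterate_eq_zero_of_le ha hi, zero_mul, smul_zero]
  · rw [D.iterate_eq_zero_of_le hb (by omega), mul_zero, smul_zero]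

theorem iterate_add_map_mul_ne_zero [IsDomain A] [CharZero A] {a b : A} {p q : ℕ}
    (ha : D^[p] a ≠ 0) (ha' : D^[p + 1] a = 0) (hb : D^[q] b ≠ 0) (hb' : D^[q + 1] b = 0) :
    D^[p + q] (a * b) ≠ 0 := by
  rw [D.iterate_add_map_mul_of_iterate_succ_eq_zero ha' hb', nsmul_eq_mul]
  exact mul_ne_zero (Nat.cast_ne_zero.2 (Nat.choose_pos (Nat.le_add_right p q)).ne')
    (mul_ne_zero ha hb)

end Derivation

/-- If `B` is a locally nilpotent derivation of an integral domain of characteristic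
zero and `f` divides `B f`, then `B f = 0`. -/
theorem deriv_eq_zero_of_dvd {A : Type*} [CommRing A] [IsDomain A] [CharZero A]
    (B : Derivation ℤ A A) (hB : ∀ a : A, ∃ n : ℕ, (⇑B)^[n] a = 0) (f : A)
    (hdvd : B f ∈ Ideal.span ({f} : Set A)) :
    B f = 0 := by
  by_contra hne
  obtain ⟨c, hc⟩ := Ideal.mem_span_singleton.mp hdvd
  have hf : f ≠ 0 := by rintro rfl; exact hne (by simp)
  have hc0 : c ≠ 0 := by rintro rfl; exact hne (by simp [hc])
  have degree {a : A} (ha : a ≠ 0) : ∃ p, (⇑B)^[p] a ≠ 0 ∧ (⇑B)^[p + 1] a = 0 :=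
    (hB a).elim fun _ => Function.exists_iterate_ne_zero_iterate_succ_eq_zero ha
  obtain ⟨p, hp, hp'⟩ := degree hf
  obtain ⟨q, hq, hq'⟩ := degree hc0
  apply B.iterate_add_map_mul_ne_zero hp hp' hq hq'
  rw [← hc, ← Function.iterate_succ_apply]
  exact B.iterate_eq_zero_of_le hp' (by omega)
end
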